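/- Let (Y, X) be a random pair with Y non-negative, 0 < E[Y] < ∞ and continuous CDF F_Y, and let mu-hat be a regression function such that mu-hat(X) is non-negative with finite mean, continuous CDF F_{mu-hat(X)}, and mu-hat is auto-calibrated for Y, i.e. E[Y | mu-hat(X)] = mu-hat(X) almost surely. Assume furthermore that E[Y · F_Y(Y)] ≠ E[Y]/2. Then the Gini index admits the closed-form representation G_{Y, mu-hat(X)} = ( 2 E[ mu-hat(X) · F_{mu-hat(X)}(mu-hat(X)) ] − E[ mu-hat(X) ] ) / ( 2 E[ Y · F_Y(Y) ] − E[ Y ] ). -/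

import Mathlib

open MeasureTheory ProbabilityTheory

/-- The cumulative distribution function of a measure on `ℝ`. -/
noncomputable def cdfOf (μ : Measure ℝ) (y : ℝ) : ℝ := (μ (Set.Iic y)).toReal

/-- The left-continuous generalized inverse of a CDF: `F⁻¹(p) = inf {t | p ≤ F t}`. -/
noncomputable def leftContInv (F : ℝ → ℝ) (p : ℝ) : ℝ := sInf {t : ℝ | p ≤ F t}

/-!
Write `Z = μ̂(X)` and let `F` be its continuous CDF. For `p ∈ (0,1)` the events `F⁻¹(p) < Z`
and `p < F(Z)` differ only on `{F(Z) = p}`, which is null for all but countably many `p`.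
Hence, by Fubini,
`∫₀¹ E[Y; F⁻¹(1-α) < Z] dα = E[Y · ∫₀¹ 1{1-α < F(Z)} dα] = E[Y F(Z)]`.
Auto-calibration turns `E[Y F(Z)]` into `E[Z F(Z)]` (pull-out property) and `E[Y]` into `E[Z]`,
and the Gini ratio simplifies to the closed form.
-/

open Filter Set

section Quantile

variable {F : ℝ → ℝ} {p w : ℝ}

theorem leftContInv_lt_of_lt (hF : Monotone F) (hc : ContinuousWithinAt F (Iio w) w)
    (hp : ∃ t, F t < p) (h : p < F w) : leftContInv F p < w := by
  obtain ⟨t₀, ht₀⟩ := hp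
  have hbdd : BddBelow {t | p ≤ F t} :=
    ⟨t₀, fun t ht => le_of_lt (hF.reflect_lt (ht₀.trans_le ht))⟩
  obtain ⟨t, htp, htw⟩ := ((hc.eventually (lt_mem_nhds h)).and self_mem_nhdsWithin).exists
  exact (csInf_le hbdd htp.le).trans_lt htw

theorem le_of_leftContInv_lt (hF : Monotone F) (hp : ∃ t, p ≤ F t)
    (h : leftContInv F p < w) : p ≤ F w := by
  obtain ⟨t, ht, htw⟩ : ∃ t ∈ {t | p ≤ F t}, t < w := by
    by_cases hbdd : BddBelow {t | p ≤ F t}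
    · exact (csInf_lt_iff hbdd hp).mp h
    · obtain ⟨t, ht, htw⟩ := not_bddBelow_iff.mp hbdd w
      exact ⟨t, ht, htw⟩
  exact ht.trans (hF htw.le)

theorem leftContInv_cdf_lt_iff {μ : Measure ℝ} [IsProbabilityMeasure μ]
    (hF : Continuous (cdf μ)) (hp : p ∈ Ioo 0 1) (hpw : cdf μ w ≠ p) :
    leftContInv (cdf μ) p < w ↔ p < cdf μ w := by
  refine ⟨fun h => (le_of_leftContInv_lt (monotone_cdf μ) ?_ h).lt_of_ne hpw.symm,
    leftContInv_lt_of_lt (monotone_cdf μ) hF.continuousAt.continuousWithinAt ?_⟩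
  · exact ((tendsto_cdf_atTop μ).eventually (eventually_ge_nhds hp.2)).exists
  · exact ((tendsto_cdf_atBot μ).eventually (eventually_lt_nhds hp.1)).exists

end Quantile

theorem cdfOf_eq_cdf (μ : Measure ℝ) [IsProbabilityMeasure μ] : cdfOf μ = cdf μ := by
  ext x; rw [cdfOf, cdf_eq_real, measureReal_def]

theorem norm_cdfOf_le_one (μ : Measure ℝ) [IsProbabilityMeasure μ] (x : ℝ) :
    ‖cdfOf μ x‖ ≤ 1 := by
  rw [cdfOf_eq_cdf, Real.norm_of_nonneg (cdf_nonneg μ x)]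
  exact cdf_le_one μ x

theorem integral_Ioo_indicator_one_sub_lt {c : ℝ} (hc : c ∈ Icc 0 1) (y : ℝ) :
    ∫ α in Ioo 0 1, {α : ℝ | 1 - α < c}.indicator (fun _ => y) α = y * c := by
  have hset : {α : ℝ | 1 - α < c} = Ioi (1 - c) := by ext; simp [sub_lt_comm]
  rw [hset, integral_indicator_const _ measurableSet_Ioi, smul_eq_mul,
    measureReal_restrict_apply measurableSet_Ioi, Ioi_inter_Ioo, max_eq_left (by linarith [hc.2]),
    Real.volume_real_Ioo_of_le (by linarith [hc.1])]
  ring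

section LayerCake

variable {Ω : Type*} [MeasurableSpace Ω] {P : Measure Ω}

theorem integral_Ioo_setIntegral_one_sub_lt [SFinite P] {Y G : Ω → ℝ}
    (hY : Integrable Y P) (hG : Measurable G) (hG01 : ∀ ω, G ω ∈ Icc 0 1) :
    ∫ α in Ioo 0 1, ∫ ω in {ω | 1 - α < G ω}, Y ω ∂P = ∫ ω, Y ω * G ω ∂P := by
  set V : Set (ℝ × Ω) := {q | 1 - q.1 < G q.2}
  have hV : MeasurableSet V :=
    measurableSet_lt (measurable_const.sub measurable_fst) (hG.comp measurable_snd)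
  set f : ℝ → Ω → ℝ := fun α ω => V.indicator (fun q => Y q.2) (α, ω)
  have hf : Integrable (Function.uncurry f) ((volume.restrict (Ioo (0 : ℝ) 1)).prod P) := by
    simpa [f, Function.uncurry_def] using
      ((integrable_const (μ := volume.restrict (Ioo (0 : ℝ) 1)) (1 : ℝ)).mul_prod hY).indicator hV
  calc ∫ α in Ioo 0 1, ∫ ω in {ω | 1 - α < G ω}, Y ω ∂P
      = ∫ α in Ioo 0 1, ∫ ω, f α ω ∂P :=
        integral_congr_ae (ae_of_all _ fun _ =>
          (integral_indicator (measurableSet_lt measurable_const hG)).symm)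
    _ = ∫ ω, (∫ α in Ioo 0 1, f α ω) ∂P := integral_integral_swap hf
    _ = ∫ ω, Y ω * G ω ∂P :=
        integral_congr_ae (ae_of_all _ fun ω => integral_Ioo_indicator_one_sub_lt (hG01 ω) (Y ω))

variable [IsProbabilityMeasure P] {Y Z : Ω → ℝ}

theorem ae_leftContInv_cdf_lt_ae_eq (hZ : Measurable Z) (hF : Continuous (cdf (P.map Z))) :
    ∀ᵐ α ∂(volume.restrict (Ioo (0 : ℝ) 1)),
      {ω | leftContInv (cdf (P.map Z)) (1 - α) < Z ω}
        =ᵐ[P] {ω | 1 - α < cdf (P.map Z) (Z ω)} := by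
  have := Measure.isProbabilityMeasure_map (μ := P) hZ.aemeasurable
  set F := cdf (P.map Z)
  have hatoms : {t | 0 < P {ω | F (Z ω) = t}}.Countable :=
    Measure.countable_meas_level_set_pos (hF.measurable.comp hZ)
  have hnonatom : ∀ᵐ α ∂volume, α ∉ (1 - ·) ⁻¹' {t | 0 < P {ω | F (Z ω) = t}} :=
    measure_eq_zero_iff_ae_notMem.mp ((hatoms.preimage sub_right_injective).measure_zero volume)
  filter_upwards [ae_restrict_mem measurableSet_Ioo, ae_restrict_of_ae hnonatom] with α hα hαF
  have hlevel : P {ω | F (Z ω) = 1 - α} = 0 := nonpos_iff_eq_zero.mp (not_lt.mp hαF)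
  filter_upwards [measure_eq_zero_iff_ae_notMem.mp hlevel] with ω hω
  exact propext (leftContInv_cdf_lt_iff hF ⟨by linarith [hα.2], by linarith [hα.1]⟩ hω)

theorem integral_Ioo_setIntegral_leftContInv_lt (hY : Integrable Y P) (hZ : Measurable Z)
    (hF : Continuous (cdfOf (P.map Z))) :
    ∫ α in Ioo 0 1, ∫ ω in {ω | leftContInv (cdfOf (P.map Z)) (1 - α) < Z ω}, Y ω ∂P
      = ∫ ω, Y ω * cdfOf (P.map Z) (Z ω) ∂P := by
  have := Measure.isProbabilityMeasure_map (μ := P) hZ.aemeasurable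
  rw [cdfOf_eq_cdf] at hF ⊢
  rw [← integral_Ioo_setIntegral_one_sub_lt (G := fun ω => cdf (P.map Z) (Z ω)) hY
    (hF.measurable.comp hZ) fun ω => ⟨cdf_nonneg _ _, cdf_le_one _ _⟩]
  refine integral_congr_ae ?_
  filter_upwards [ae_leftContInv_cdf_lt_ae_eq hZ hF] with α hα
  exact setIntegral_congr_set hα

end LayerCake

theorem integral_condExp_mul {Ω : Type*} {m m₀ : MeasurableSpace Ω} {μ : Measure Ω}
    (hm : m ≤ m₀) [SigmaFinite (μ.trim hm)] {f g : Ω → ℝ} (hf : StronglyMeasurable[m] f) {c : ℝ}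
    (hbound : ∀ᵐ ω ∂μ, ‖f ω‖ ≤ c) (hg : Integrable g μ) :
    ∫ ω, μ[g | m] ω * f ω ∂μ = ∫ ω, g ω * f ω ∂μ :=
  calc ∫ ω, μ[g | m] ω * f ω ∂μ = ∫ ω, μ[g * f | m] ω ∂μ :=
        integral_congr_ae (condExp_mul_of_stronglyMeasurable_right hf
          (hg.mul_bdd (hf.mono hm).aestronglyMeasurable hbound) hg).symm
    _ = ∫ ω, g ω * f ω ∂μ := integral_condExp hm

theorem div_sub_half_div_div_sub_half {a b e : ℝ} (he : e ≠ 0) :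
    (a / e - 1 / 2) / (b / e - 1 / 2) = (2 * a - e) / (2 * b - e) := by
  have h : ∀ x : ℝ, x / e - 1 / 2 = (2 * x - e) / (2 * e) := fun x => by field_simp
  rw [h, h, div_div_div_cancel_right₀ (mul_ne_zero two_ne_zero he)]

theorem gini_closed_form_general
    {Ω E : Type*} [MeasureSpace Ω] [IsProbabilityMeasure (ℙ : Measure Ω)]
    [MeasurableSpace E]
    (Y : Ω → ℝ) (X : Ω → E) (μhat : E → ℝ)
    (hYmeas : Measurable Y) (hX : Measurable X) (hμ : Measurable μhat)
    (hYint : Integrable Y ℙ) (hEY : 0 < ∫ ω, Y ω ∂ℙ)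
    (hFYcont : Continuous (cdfOf (Measure.map Y ℙ)))
    (hFZcont : Continuous (cdfOf (Measure.map (fun ω => μhat (X ω)) ℙ)))
    (hac : ℙ[Y | MeasurableSpace.comap (fun ω => μhat (X ω)) Real.measurableSpace]
            =ᵐ[ℙ] fun ω => μhat (X ω)) :
    ((∫ α in Set.Ioo (0 : ℝ) 1,
        (∫ ω in {ω | leftContInv (cdfOf (Measure.map (fun ω => μhat (X ω)) ℙ)) (1 - α)
                      < μhat (X ω)}, Y ω ∂ℙ) / (∫ ω, Y ω ∂ℙ)) - 1 / 2)
      / ((∫ α in Set.Ioo (0 : ℝ) 1,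
            (∫ ω in {ω | leftContInv (cdfOf (Measure.map Y ℙ)) (1 - α) < Y ω}, Y ω ∂ℙ)
              / (∫ ω, Y ω ∂ℙ)) - 1 / 2)
      = (2 * (∫ ω, μhat (X ω) * cdfOf (Measure.map (fun ω => μhat (X ω)) ℙ) (μhat (X ω)) ∂ℙ)
            - ∫ ω, μhat (X ω) ∂ℙ)
        / (2 * (∫ ω, Y ω * cdfOf (Measure.map Y ℙ) (Y ω) ∂ℙ) - ∫ ω, Y ω ∂ℙ) := by
  have hZ : Measurable fun ω => μhat (X ω) := hμ.comp hX
  have hm := hZ.comap_le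
  have hmean : ∫ ω, Y ω ∂ℙ = ∫ ω, μhat (X ω) ∂ℙ :=
    (integral_condExp hm).symm.trans (integral_congr_ae hac)
  have hweight : ∫ ω, Y ω * cdfOf (Measure.map (fun ω => μhat (X ω)) ℙ) (μhat (X ω)) ∂ℙ
      = ∫ ω, μhat (X ω) * cdfOf (Measure.map (fun ω => μhat (X ω)) ℙ) (μhat (X ω)) ∂ℙ := by
    have := Measure.isProbabilityMeasure_map (μ := ℙ) hZ.aemeasurable
    rw [← integral_condExp_mul hm
      (f := fun ω => cdfOf (Measure.map (fun ω => μhat (X ω)) ℙ) (μhat (X ω)))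
      (hFZcont.measurable.comp (comap_measurable _)).stronglyMeasurable
      (ae_of_all _ fun ω => norm_cdfOf_le_one _ (μhat (X ω))) hYint]
    exact integral_congr_ae (hac.mul EventuallyEq.rfl)
  rw [integral_div, integral_div, integral_Ioo_setIntegral_leftContInv_lt hYint hZ hFZcont,
    integral_Ioo_setIntegral_leftContInv_lt hYint hYmeas hFYcont, hweight, ← hmean]
  exact div_sub_half_div_div_sub_half hEY.ne'

/-- **Closed-form representation of the Gini index under auto-calibration.**
Let `(Y, X)` be a random pair with `Y` non-negative, `0 < E[Y] < ∞` with continuous CDF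
`F_Y`, and let `μ̂` be a regression function with `μ̂(X)` non-negative, integrable, with
continuous CDF `F_{μ̂(X)}`, auto-calibrated for `Y`. Assume `E[Y · F_Y(Y)] ≠ E[Y]/2`.
Then the Gini index
`G = (∫_0^1 CAP_{Y,μ̂(X)}(α) dα − 1/2) / (∫_0^1 CAP_{Y,Y}(α) dα − 1/2)` satisfies
`G = (2 E[μ̂(X) F_{μ̂(X)}(μ̂(X))] − E[μ̂(X)]) / (2 E[Y F_Y(Y)] − E[Y])`. -/
theorem gini_closed_form
    {Ω E : Type*} [MeasureSpace Ω] [IsProbabilityMeasure (ℙ : Measure Ω)]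
    [MeasurableSpace E]
    (Y : Ω → ℝ) (X : Ω → E) (μhat : E → ℝ)
    (hYmeas : Measurable Y) (hX : Measurable X) (hμ : Measurable μhat)
    (hYnn : ∀ ω, 0 ≤ Y ω) (hYint : Integrable Y ℙ) (hEY : 0 < ∫ ω, Y ω ∂ℙ)
    (hFYcont : Continuous (cdfOf (Measure.map Y ℙ)))
    (hZnn : ∀ ω, 0 ≤ μhat (X ω))
    (hZint : Integrable (fun ω => μhat (X ω)) ℙ)
    (hFZcont : Continuous (cdfOf (Measure.map (fun ω => μhat (X ω)) ℙ)))
    (hac : ℙ[Y | MeasurableSpace.comap (fun ω => μhat (X ω)) Real.measurableSpace]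
            =ᵐ[ℙ] fun ω => μhat (X ω))
    (hdenom : ∫ ω, Y ω * cdfOf (Measure.map Y ℙ) (Y ω) ∂ℙ ≠ (∫ ω, Y ω ∂ℙ) / 2) :
    ((∫ α in Set.Ioo (0 : ℝ) 1,
        (∫ ω in {ω | leftContInv (cdfOf (Measure.map (fun ω => μhat (X ω)) ℙ)) (1 - α)
                      < μhat (X ω)}, Y ω ∂ℙ) / (∫ ω, Y ω ∂ℙ)) - 1 / 2)
      / ((∫ α in Set.Ioo (0 : ℝ) 1,
            (∫ ω in {ω | leftContInv (cdfOf (Measure.map Y ℙ)) (1 - α) < Y ω}, Y ω ∂ℙ)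
              / (∫ ω, Y ω ∂ℙ)) - 1 / 2)
      = (2 * (∫ ω, μhat (X ω) * cdfOf (Measure.map (fun ω => μhat (X ω)) ℙ) (μhat (X ω)) ∂ℙ)
            - ∫ ω, μhat (X ω) ∂ℙ)
        / (2 * (∫ ω, Y ω * cdfOf (Measure.map Y ℙ) (Y ω) ∂ℙ) - ∫ ω, Y ω ∂ℙ) :=
  gini_closed_form_general Y X μhat hYmeas hX hμ hYint hEY hFYcont hFZcont hac
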